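/- Every model of a theory Γ obtained from Δ by the reduction step (replacing A ⇒ B by A ∪ (S(C,A)⋆ ⊗ D) ⇒ B for some C ⇒ D ∈ Δ) is a model of the original formula A ⇒ B: if ||A ∪ (S(C,A)⋆ ⊗ D) ⇒ B||*_M = 1 and ||C ⇒ D||*_M = 1, then ||A ⇒ B||*_M = 1. -/
import Mathlib


/-- A (complete) residuated lattice: a complete lattice with a commutative
monoid operation `mul` with unit `⊤` and residuum `resid` satisfying adjointness. -/
class ResLat (L : Type*) extends CompleteLattice L where
  mul : L → L → L
  resid : L → L → L
  mul_comm : ∀ a b : L, mul a b = mul b a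
  mul_assoc : ∀ a b c : L, mul (mul a b) c = mul a (mul b c)
  mul_top : ∀ a : L, mul a ⊤ = a
  adjoint : ∀ a b c : L, mul a b ≤ c ↔ a ≤ resid b c

open ResLat

/-- Subsethood degree `S(A,B) = ⨅ y, A y → B y`. -/
def Sdeg {L Y : Type*} [ResLat L] (A B : Y → L) : L := ⨅ y, resid (A y) (B y)

/-- Idempotent truth-stressing hedge. -/
def IsHedge {L : Type*} [ResLat L] (star : L → L) : Prop :=
  star ⊤ = ⊤ ∧ (∀ a : L, star a ≤ a) ∧
  (∀ a b : L, star (resid a b) ≤ resid (star a) (star b)) ∧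
  (∀ a : L, star (star a) = star a)

/-- Models of a theory (a set of graded attribute implications). -/
def Models {L Y : Type*} [ResLat L] (star : L → L)
    (T : Set ((Y → L) × (Y → L))) : Set (Y → L) :=
  {M | ∀ p ∈ T, star (Sdeg p.1 M) ≤ Sdeg p.2 M}

section Aux
variable {L : Type*} [ResLat L]

lemma resid_eq_top_iff (a b : L) : resid a b = ⊤ ↔ a ≤ b := by
  constructor
  · intro h
    have h' : (⊤ : L) ≤ resid a b := le_of_eq h.symm
    have := (adjoint ⊤ a b).mpr h'
    rwa [ResLat.mul_comm, ResLat.mul_top] at this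
  · intro h
    exact le_antisymm le_top ((adjoint ⊤ a b).mp
      (by rw [ResLat.mul_comm, ResLat.mul_top]; exact h))

lemma mul_le_iff (a b c : L) : mul a b ≤ c ↔ b ≤ resid a c := by
  rw [ResLat.mul_comm]; exact adjoint b a c

lemma mul_mono_left {a b : L} (c : L) (h : a ≤ b) : mul a c ≤ mul b c :=
  (adjoint a c (mul b c)).mpr (le_trans h ((adjoint b c (mul b c)).mp le_rfl))

lemma mul_mono_right (a : L) {b c : L} (h : b ≤ c) : mul a b ≤ mul a c := by
  rw [ResLat.mul_comm a b, ResLat.mul_comm a c]; exact mul_mono_left a h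

lemma star_mono {star : L → L} (hs : IsHedge star) {a b : L} (h : a ≤ b) :
    star a ≤ star b := by
  obtain ⟨h0, _, h2, _⟩ := hs
  have h3 : star (resid a b) ≤ resid (star a) (star b) := h2 a b
  rw [(resid_eq_top_iff a b).mpr h, h0] at h3
  have := (adjoint ⊤ (star a) (star b)).mpr h3
  rwa [ResLat.mul_comm, ResLat.mul_top] at this

lemma star_submul {star : L → L} (hs : IsHedge star) (a b : L) :
    mul (star a) (star b) ≤ star (mul a b) := by
  have hb : b ≤ resid a (mul a b) := (mul_le_iff a b (mul a b)).mp le_rfl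
  have := le_trans (star_mono hs hb) (hs.2.2.1 a (mul a b))
  exact (mul_le_iff (star a) (star b) (star (mul a b))).mpr this

lemma Sdeg_le {Y : Type*} (A B : Y → L) (y : Y) : Sdeg A B ≤ resid (A y) (B y) :=
  iInf_le _ y

lemma Sdeg_trans {Y : Type*} (A B C : Y → L) :
    mul (Sdeg A B) (Sdeg B C) ≤ Sdeg A C := by
  refine le_iInf fun y => ?_
  rw [← adjoint, ResLat.mul_comm (Sdeg A B), ResLat.mul_assoc]
  refine le_trans (mul_mono_right _ ((adjoint _ _ _).mpr (Sdeg_le A B y))) ?_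
  exact (adjoint _ _ _).mpr (Sdeg_le B C y)

end Aux

theorem model_of_enlarged_implies_model {L Y : Type*} [ResLat L] [Fintype Y]
    (star : L → L) (hs : IsHedge star) (A B C D M : Y → L)
    (h1 : resid (star (Sdeg (fun y => A y ⊔ mul (star (Sdeg C A)) (D y)) M))
            (Sdeg B M) = ⊤)
    (h2 : resid (star (Sdeg C M)) (Sdeg D M) = ⊤) :
    resid (star (Sdeg A M)) (Sdeg B M) = ⊤ := by
  rw [resid_eq_top_iff] at h1 h2 ⊢
  set s := star (Sdeg C A) with hsdef
  set t := star (Sdeg A M) with htdef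
  have key : t ≤ Sdeg (fun y => A y ⊔ mul s (D y)) M := by
    refine le_iInf fun y => ?_
    show t ≤ resid (A y ⊔ mul s (D y)) (M y)
    rw [← mul_le_iff, adjoint]
    refine sup_le ?_ ?_
    · rw [← adjoint, ResLat.mul_comm, adjoint]
      exact le_trans (hs.2.1 _) (Sdeg_le A M y)
    · rw [← adjoint]
      have e : mul (mul s (D y)) t = mul (mul s t) (D y) := by
        rw [ResLat.mul_assoc, ResLat.mul_assoc, ResLat.mul_comm (D y) t]
      rw [e, adjoint]
      have h3 : mul s t ≤ star (mul (Sdeg C A) (Sdeg A M)) := star_submul hs _ _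
      have h4 : star (mul (Sdeg C A) (Sdeg A M)) ≤ star (Sdeg C M) :=
        star_mono hs (Sdeg_trans C A M)
      exact le_trans (le_trans h3 h4) (le_trans h2 (Sdeg_le D M y))
  have hfin : star t ≤ Sdeg B M := le_trans (star_mono hs key) h1
  rwa [htdef, hs.2.2.2] at hfin
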